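/- In PG(2,q) with q even, every line meets the hyperoval O = K ∪ {N} (a nonsingular conic together with its nucleus) in exactly 0 or 2 points. -/

import Mathlib

/-!
The conic `X² + YZ = 0` consists of the points `(t : -1 : t²)` and `(0 : 0 : 1)`, so a line `ℓ`
meets it in the zeros on the projective line of the binary form `ℓ₂ X² + ℓ₀ XY - ℓ₁ Y²`.
In characteristic 2 this form is separable when `ℓ₀ ≠ 0`, giving 0 or 2 zeros, and the line
misses the nucleus `(1 : 0 : 0)`; when `ℓ₀ = 0` it is a square over the perfect field `F`, giving
exactly one zero, and the line passes through the nucleus.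
-/

open Matrix
open scoped LinearAlgebra.Projectivization

section Quadratic

open Classical

variable {F : Type*} [Field F]

def quadRoots (a b c : F) : Set F := {x | a * x ^ 2 + b * x = c}

-- The zeros of the binary form `a X² + b XY - c Y²` on the projective line: the affine roots,
-- and `∞` when `a = 0`.
noncomputable def quadZeroCount (a b c : F) : ℕ :=
  (quadRoots a b c).ncard + if a = 0 then 1 else 0

lemma quadRoots_eq_pair {a b c r : F} (ha : a ≠ 0) (hr : a * r ^ 2 + b * r = c) :
    quadRoots a b c = {r, -r - b / a} := by
  ext x
  have hfactor : a * x ^ 2 + b * x - c = (x - r) * (a * x + a * r + b) := by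
    linear_combination hr
  have hlin : a * x + a * r + b = 0 ↔ x = -r - b / a := by
    constructor <;> intro h
    · field_simp
      linear_combination h
    · rw [h]
      field_simp
      ring
  rw [quadRoots, Set.mem_ofPred_eq, ← sub_eq_zero, hfactor, mul_eq_zero, sub_eq_zero, hlin]
  rfl

variable [CharP F 2]

lemma ncard_quadRoots_of_root {a b c r : F} (ha : a ≠ 0) (hr : a * r ^ 2 + b * r = c) :
    (quadRoots a b c).ncard = if b = 0 then 1 else 2 := by
  rw [quadRoots_eq_pair ha hr, sub_eq_add_neg, CharTwo.neg_eq, CharTwo.neg_eq]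
  split_ifs with hb
  · simp [hb]
  · exact Set.ncard_pair (by simpa [ha] using hb)

lemma quadZeroCount_eq_zero_or_two {a b c : F} (hb : b ≠ 0) :
    quadZeroCount a b c = 0 ∨ quadZeroCount a b c = 2 := by
  unfold quadZeroCount
  obtain rfl | ha := eq_or_ne a 0
  · have hroots : quadRoots 0 b c = {c / b} := by
      ext x
      simp only [quadRoots, Set.mem_ofPred_eq, Set.mem_singleton_iff]
      constructor <;> intro h <;> field_simp at h ⊢ <;> linear_combination h
    simp [hroots]
  · by_cases hr : ∃ r, a * r ^ 2 + b * r = c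
    · obtain ⟨r, hr⟩ := hr
      simp [ncard_quadRoots_of_root ha hr, ha, hb]
    · have hroots : quadRoots a b c = ∅ := Set.eq_empty_iff_forall_notMem.2 fun x hx => hr ⟨x, hx⟩
      simp [hroots, ha]

lemma quadZeroCount_eq_one [PerfectRing F 2] {a c : F} (hac : a ≠ 0 ∨ c ≠ 0) :
    quadZeroCount a 0 c = 1 := by
  unfold quadZeroCount
  obtain rfl | ha := eq_or_ne a 0
  · have hroots : quadRoots 0 0 c = ∅ := by
      simp [quadRoots, Ne.symm (hac.resolve_left (not_not.2 rfl))]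
    simp [hroots]
  · obtain ⟨r, hr⟩ := surjective_frobenius F 2 (c / a)
    have hroot : a * r ^ 2 + 0 * r = c := by
      rw [frobenius_def] at hr
      rw [hr]
      field_simp
      ring
    simp [ncard_quadRoots_of_root ha hroot, ha]

end Quadratic

section Hyperoval

open Projectivization

variable (F : Type*) [Field F]

def conicForm (v : Fin 3 → F) : F := v 0 ^ 2 + v 1 * v 2

def conic : Set (ℙ F (Fin 3 → F)) := {p | conicForm F p.rep = 0}

def nucleus : ℙ F (Fin 3 → F) := mk F ![1, 0, 0] (by simp)

def hyperoval : Set (ℙ F (Fin 3 → F)) := conic F ∪ {nucleus F}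

variable {F}

def line (ℓ : Fin 3 → F) : Set (ℙ F (Fin 3 → F)) := {p | ℓ ⬝ᵥ p.rep = 0}

-- The sign makes a line `ℓ` meet the conic at the parameters `t` with `ℓ 2 t² + ℓ 0 t = ℓ 1`.
def conicPoint (t : F) : ℙ F (Fin 3 → F) := mk F ![t, -1, t ^ 2] (by simp)

variable (F) in
def conicPointInf : ℙ F (Fin 3 → F) := mk F ![0, 0, 1] (by simp)

lemma conicForm_smul (c : F) (v : Fin 3 → F) : conicForm F (c • v) = c ^ 2 * conicForm F v := by
  simp only [conicForm, Pi.smul_apply, smul_eq_mul]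
  ring

lemma mk_mem_conic {v : Fin 3 → F} (hv : v ≠ 0) : mk F v hv ∈ conic F ↔ conicForm F v = 0 := by
  obtain ⟨c, hc⟩ := exists_smul_eq_mk_rep F v hv
  rw [conic, Set.mem_ofPred_eq, ← hc, Units.smul_def, conicForm_smul]
  simp

lemma mk_mem_line {ℓ v : Fin 3 → F} (hv : v ≠ 0) : mk F v hv ∈ line ℓ ↔ ℓ ⬝ᵥ v = 0 := by
  obtain ⟨c, hc⟩ := exists_smul_eq_mk_rep F v hv
  rw [line, Set.mem_ofPred_eq, ← hc, Units.smul_def, dotProduct_smul]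
  simp

lemma conicPoint_injective : Function.Injective (conicPoint (F := F)) := by
  intro s t hst
  obtain ⟨c, hc⟩ := (mk_eq_mk_iff' F _ _ _ _).1 hst
  have h0 := congrFun hc 0
  have h1 := congrFun hc 1
  simp only [Pi.smul_apply, smul_eq_mul, cons_val_zero, cons_val_one,
    mul_neg, mul_one, neg_inj] at h0 h1
  rw [← h0, h1, one_mul]

lemma conicPointInf_notMem_range : conicPointInf F ∉ Set.range conicPoint := by
  rintro ⟨t, ht⟩
  obtain ⟨c, hc⟩ := (mk_eq_mk_iff' F _ _ _ _).1 ht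
  simpa using congrFun hc 1

lemma nucleus_notMem_conic : nucleus F ∉ conic F := by
  simp [nucleus, mk_mem_conic, conicForm]

lemma conic_eq_range_union : conic F = Set.range conicPoint ∪ {conicPointInf F} := by
  refine Set.Subset.antisymm ?_ ?_
  · intro p hp
    induction p using Projectivization.ind with | h v hv => ?_
    rw [mk_mem_conic, conicForm] at hp
    by_cases h1 : v 1 = 0
    · have h0 : v 0 = 0 := pow_eq_zero_iff two_ne_zero |>.1 (by simpa [h1] using hp)
      have h2 : v 2 ≠ 0 := fun h2 => hv (by ext i; fin_cases i <;> simp [h0, h1, h2])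
      refine Or.inr ((mk_eq_mk_iff' F _ _ _ _).2 ⟨v 2, ?_⟩)
      ext i
      fin_cases i <;> simp [h0, h1]
    · refine Or.inl ⟨-v 0 / v 1, ((mk_eq_mk_iff' F _ _ _ _).2 ⟨-v 1, ?_⟩).symm⟩
      ext i
      fin_cases i
      · simp [field]
      · simp
      · simp only [Fin.reduceFinMk, Pi.smul_apply, cons_val, smul_eq_mul]
        field_simp
        linear_combination -hp
  · rintro p (⟨t, rfl⟩ | rfl) <;> simp [conicPoint, conicPointInf, mk_mem_conic, conicForm]

lemma conicPoint_mem_line {ℓ : Fin 3 → F} {t : F} :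
    conicPoint t ∈ line ℓ ↔ ℓ 2 * t ^ 2 + ℓ 0 * t = ℓ 1 := by
  simp only [conicPoint, mk_mem_line, dotProduct, Fin.sum_univ_three, cons_val]
  constructor <;> intro h <;> linear_combination h

lemma conicPointInf_mem_line {ℓ : Fin 3 → F} : conicPointInf F ∈ line ℓ ↔ ℓ 2 = 0 := by
  simp [conicPointInf, mk_mem_line, dotProduct, Fin.sum_univ_three]

lemma nucleus_mem_line {ℓ : Fin 3 → F} : nucleus F ∈ line ℓ ↔ ℓ 0 = 0 := by
  simp [nucleus, mk_mem_line, dotProduct, Fin.sum_univ_three]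

end Hyperoval

open Classical in
lemma ncard_hyperoval_inter_line {F : Type*} [Field F] [Finite F] (ℓ : Fin 3 → F) :
    (hyperoval F ∩ line ℓ).ncard = quadZeroCount (ℓ 2) (ℓ 0) (ℓ 1) + if ℓ 0 = 0 then 1 else 0 := by
  have hconic : Disjoint (conic F ∩ line ℓ) ({nucleus F} ∩ line ℓ) :=
    (Set.disjoint_singleton_right.2 nucleus_notMem_conic).mono
      Set.inter_subset_left Set.inter_subset_left
  have hrange : Disjoint (Set.range conicPoint ∩ line ℓ) ({conicPointInf F} ∩ line ℓ) :=
    (Set.disjoint_singleton_right.2 conicPointInf_notMem_range).mono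
      Set.inter_subset_left Set.inter_subset_left
  have hpoint (p : ℙ F (Fin 3 → F)) : ({p} ∩ line ℓ).ncard = if p ∈ line ℓ then 1 else 0 := by
    split_ifs with hp <;> simp [hp]
  have hroots : conicPoint ⁻¹' line ℓ = quadRoots (ℓ 2) (ℓ 0) (ℓ 1) :=
    Set.ext fun _ => conicPoint_mem_line
  rw [hyperoval, Set.union_inter_distrib_right, Set.ncard_union_eq hconic, conic_eq_range_union,
    Set.union_inter_distrib_right, Set.ncard_union_eq hrange, ← Set.image_preimage_eq_range_inter,
    Set.ncard_image_of_injective _ conicPoint_injective, hroots, hpoint, hpoint,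
    conicPointInf_mem_line, nucleus_mem_line, quadZeroCount]

/-- In `PG(2,q)`, `q` even, every line meets the hyperoval `O = K ∪ {N}`
(the conic `X² + YZ = 0` together with its nucleus `(1,0,0)`) in exactly
0 or 2 points. -/
theorem stmt_17 (F : Type*) [Field F] [Fintype F] [CharP F 2]
    (ℓ : Fin 3 → F) (hℓ : ℓ ≠ 0) :
    ({p : Projectivization F (Fin 3 → F) |
        ((p.rep 0) ^ 2 + p.rep 1 * p.rep 2 = 0 ∨
          p = Projectivization.mk F ![1, 0, 0] (by simp)) ∧
        ℓ ⬝ᵥ p.rep = 0} : Set (Projectivization F (Fin 3 → F))).ncard = 0 ∨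
    ({p : Projectivization F (Fin 3 → F) |
        ((p.rep 0) ^ 2 + p.rep 1 * p.rep 2 = 0 ∨
          p = Projectivization.mk F ![1, 0, 0] (by simp)) ∧
        ℓ ⬝ᵥ p.rep = 0} : Set (Projectivization F (Fin 3 → F))).ncard = 2 := by
  change (hyperoval F ∩ line ℓ).ncard = 0 ∨ (hyperoval F ∩ line ℓ).ncard = 2
  rw [ncard_hyperoval_inter_line]
  by_cases h0 : ℓ 0 = 0
  · have h21 : ℓ 2 ≠ 0 ∨ ℓ 1 ≠ 0 := by
      by_contra! h21
      exact hℓ (funext fun i => by fin_cases i <;> simp [h0, h21])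
    right
    rw [h0, quadZeroCount_eq_one h21, if_pos rfl]
  · simpa [h0] using quadZeroCount_eq_zero_or_two h0
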